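/- Under assumption (★), let (R, μ) satisfy the pre-processing conditions. If there exists a critical hospital with respect to (R, μ), then there does not exist a stable matching in G. -/

import Mathlib

open Classical

variable {D H : Type}

def edgesD (E : Set (D × H)) (d : D) : Set (D × H) := {e ∈ E | e.1 = d}

def edgesH (E : Set (D × H)) (h : H) : Set (D × H) := {e ∈ E | e.2 = h}

def optD (E : Set (D × H)) (d : D) : Set (Option (D × H)) :=
  insert none (some '' edgesD E d)

def optH (E : Set (D × H)) (h : H) : Set (Option (D × H)) :=
  insert none (some '' edgesH E h)

/-- An instance of the strongly stable matching problem with closures: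
a bipartite graph between doctors `D` and hospitals `H` with edge set `E`,
a set `S` of closable hospitals, and for each vertex a transitive, total
preference relation on its incident edges together with `∅` (modelled by
`Option`, where `none` plays the role of `∅`), such that every incident
edge is strictly preferred to `∅`. -/
structure SSMC (D H : Type) where
  E : Set (D × H)
  S : Set H
  prefD : D → Option (D × H) → Option (D × H) → Prop
  prefH : H → Option (D × H) → Option (D × H) → Prop
  prefD_trans : ∀ d, ∀ e ∈ optD E d, ∀ f ∈ optD E d, ∀ g ∈ optD E d,
    prefD d e f → prefD d f g → prefD d e g
  prefD_total : ∀ d, ∀ e ∈ optD E d, ∀ f ∈ optD E d, prefD d e f ∨ prefD d f e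
  prefD_none : ∀ d, ∀ e ∈ edgesD E d, prefD d (some e) none ∧ ¬ prefD d none (some e)
  prefH_trans : ∀ h, ∀ e ∈ optH E h, ∀ f ∈ optH E h, ∀ g ∈ optH E h,
    prefH h e f → prefH h f g → prefH h e g
  prefH_total : ∀ h, ∀ e ∈ optH E h, ∀ f ∈ optH E h, prefH h e f ∨ prefH h f e
  prefH_none : ∀ h, ∀ e ∈ edgesH E h, prefH h (some e) none ∧ ¬ prefH h none (some e)

namespace SSMC

variable (I : SSMC D H)

/-- `e ≻_d f` -/
def strictD (d : D) (e f : Option (D × H)) : Prop := I.prefD d e f ∧ ¬ I.prefD d f e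

/-- `e ∼_d f` -/
def simD (d : D) (e f : Option (D × H)) : Prop := I.prefD d e f ∧ I.prefD d f e

/-- `e ≻_h f` -/
def strictH (h : H) (e f : Option (D × H)) : Prop := I.prefH h e f ∧ ¬ I.prefH h f e

/-- `e ∼_h f` -/
def simH (h : H) (e f : Option (D × H)) : Prop := I.prefH h e f ∧ I.prefH h f e

/-- A matching: a subset of `E` with at most one edge at each vertex. -/
def isMatching (μ : Set (D × H)) : Prop :=
  μ ⊆ I.E ∧ (∀ e ∈ μ, ∀ f ∈ μ, e.1 = f.1 → e = f) ∧
    (∀ e ∈ μ, ∀ f ∈ μ, e.2 = f.2 → e = f)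

end SSMC

/-- `μ(d)`: the edge of `μ` at doctor `d` (or `none`). -/
noncomputable def muD (μ : Set (D × H)) (d : D) : Option (D × H) :=
  if h : ∃ e, e ∈ μ ∧ e.1 = d then some h.choose else none

/-- `μ(h)`: the edge of `μ` at hospital `h` (or `none`). -/
noncomputable def muH (μ : Set (D × H)) (h : H) : Option (D × H) :=
  if hh : ∃ e, e ∈ μ ∧ e.2 = h then some hh.choose else none

namespace SSMC

variable (I : SSMC D H)

/-- `e` blocks the matching `μ`: `e ∈ E \ μ`, `e` weakly blocks `μ` on both of its
endpoints and strongly blocks `μ` on at least one of them (where blocking on a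
hospital `h ∈ S` additionally requires `μ(h) ≠ ∅`). -/
def blocks (μ : Set (D × H)) (e : D × H) : Prop :=
  e ∈ I.E ∧ e ∉ μ ∧
  I.prefD e.1 (some e) (muD μ e.1) ∧
  (I.prefH e.2 (some e) (muH μ e.2) ∧ (e.2 ∈ I.S → muH μ e.2 ≠ none)) ∧
  (I.strictD e.1 (some e) (muD μ e.1) ∨
    (I.strictH e.2 (some e) (muH μ e.2) ∧ (e.2 ∈ I.S → muH μ e.2 ≠ none)))

/-- A stable matching: no edge blocks it. -/
def stable (μ : Set (D × H)) : Prop :=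
  I.isMatching μ ∧ ∀ e, ¬ I.blocks μ e

/-- `Ch_D(F)`: union over doctors `d` of the most preferred edges of `F(d)`. -/
def ChD (F : Set (D × H)) : Set (D × H) :=
  {e ∈ F | ∀ f ∈ F, f.1 = e.1 → I.prefD e.1 (some e) (some f)}

/-- `Ch_H(F)`: union over hospitals `h` of the most preferred edges of `F(h)`. -/
def ChH (F : Set (D × H)) : Set (D × H) :=
  {e ∈ F | ∀ f ∈ F, f.2 = e.2 → I.prefH e.2 (some e) (some f)}

/-- `Ch(F) = Ch_H(Ch_D(F))`. -/
def Ch (F : Set (D × H)) : Set (D × H) := I.ChH (I.ChD F)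

/-- `e ≻_d F` for a flat set `F`. -/
def dSucc (F : Set (D × H)) (e : D × H) : Prop :=
  (∀ f ∈ F, f.1 ≠ e.1) ∨ ∃ f ∈ F, f.1 = e.1 ∧ I.strictD e.1 (some e) (some f)

/-- `e ∼_d F` for a flat set `F`. -/
def dSim (F : Set (D × H)) (e : D × H) : Prop :=
  ∃ f ∈ F, f.1 = e.1 ∧ I.simD e.1 (some e) (some f)

/-- `block(F)` for a flat set `F ⊆ E`. -/
def setBlock (F : Set (D × H)) : Set (D × H) :=
  {e | e ∈ I.E ∧ e ∉ F ∧ (∃ f ∈ F, f.2 = e.2) ∧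
    (I.dSucc F e ∨ I.dSim F e) ∧
    (I.dSucc F e → ∃ f ∈ F, f.2 = e.2 ∧ I.prefH e.2 (some e) (some f)) ∧
    (I.dSim F e → ∃ f ∈ F, f.2 = e.2 ∧ I.strictH e.2 (some e) (some f))}

/-- `L = Ch(E \ R)`. -/
def Lset (R : Set (D × H)) : Set (D × H) := I.Ch (I.E \ R)

/-- The pre-processing conditions (R1)–(R5) on a pair `(R, μ)`. -/
def preproc (R μ : Set (D × H)) : Prop :=
  R ⊆ I.E ∧ I.isMatching μ ∧
  -- (R1)
  (∀ σ, I.stable σ → ∀ e ∈ R, e ∉ σ) ∧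
  -- (R2)
  μ ⊆ I.Ch (I.E \ R) ∧
  -- (R3)
  (∀ d : D, (∃ e ∈ I.E \ R, e.1 = d) → ∃ e ∈ μ, e.1 = d) ∧
  -- (R4)
  R ∩ I.setBlock (I.Ch (I.E \ R)) = ∅ ∧
  -- (R5)
  (∀ d : D, ∀ e ∈ R, e.1 = d → ∀ f ∈ I.E \ R, f.1 = d → I.prefD d (some e) (some f))

/-- `h` is a critical hospital with respect to `(R, μ)`. -/
def critical (R μ : Set (D × H)) (h : H) : Prop :=
  h ∉ I.S ∧ (∀ e ∈ μ, e.2 ≠ h) ∧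
  ((∃ e ∈ I.Ch (I.E \ R), e.2 = h) ∨ (∃ e ∈ R, e.2 = h))

/-- Assumption (★): every doctor strictly prefers any acceptable hospital
outside `S` to any acceptable hospital in `S`. -/
def starAssumption : Prop :=
  ∀ (d : D) (h h' : H), (d, h) ∈ I.E → (d, h') ∈ I.E → h ∈ I.S → h' ∉ I.S →
    I.strictD d (some (d, h')) (some (d, h))

end SSMC

/-!
Suppose `σ` is stable and `h₀` is critical. A doctor's `μ`-edge is weakly her best edge outside
`R`, and by (★) it leads to a hospital outside `S` whenever her `σ`-edge does; an unmatched
hospital outside `S` that a doctor weakly prefers would block `σ`. So `h₀` is matched in `σ`, and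
every `σ`-edge outside `μ` at a hospital outside `S` is followed, along a `σ`/`μ`-alternating path,
by another such edge. This successor relation is injective on a finite set, yet nothing precedes
the `σ`-edge at `h₀`, since `h₀` has no `μ`-edge.
-/

theorem Set.Finite.exists_rel_of_forall_exists_rel {α : Type*} {T : Set α} (hT : T.Finite)
    (r : α → α → Prop) (hstep : ∀ a ∈ T, ∃ b ∈ T, r a b)
    (hinj : ∀ a ∈ T, ∀ a' ∈ T, ∀ b, r a b → r a' b → a = a') :
    ∀ b ∈ T, ∃ a ∈ T, r a b := by
  intro b hb
  have : Nonempty α := ⟨b⟩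
  choose! f hfT hfr using hstep
  have hbij : Set.BijOn f T T :=
    (hT.injOn_iff_bijOn_of_mapsTo hfT).mp fun a ha a' ha' he =>
      hinj a ha a' ha' _ (hfr a ha) (he ▸ hfr a' ha')
  obtain ⟨a, ha, rfl⟩ := hbij.surjOn hb
  exact ⟨a, ha, hfr a ha⟩

/-- `g'` follows `g` on a `σ`/`μ`-alternating path: the `μ`-edge at the doctor of `g` ends at the
hospital of `g'`. -/
def altSucc (μ : Set (D × H)) (g g' : D × H) : Prop :=
  ∃ m ∈ μ, m.1 = g.1 ∧ m.2 = g'.2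

theorem prefD_muD_of_forall {I : SSMC D H} {σ : Set (D × H)} {e : D × H} (he : e ∈ I.E)
    (hpref : ∀ x ∈ σ, x.1 = e.1 → I.prefD e.1 (some e) (some x)) :
    I.prefD e.1 (some e) (muD σ e.1) := by
  unfold muD
  split_ifs with hx
  · exact hpref _ hx.choose_spec.1 hx.choose_spec.2
  · exact (I.prefD_none e.1 e ⟨he, rfl⟩).1

namespace SSMC

variable {I : SSMC D H}

theorem isMatching.finite [Finite D] {σ : Set (D × H)} (hσ : I.isMatching σ) : σ.Finite :=
  Set.Finite.of_finite_image (Set.toFinite _) fun _ he _ hf => hσ.2.1 _ he _ hf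

theorem isMatching.altSucc_injective {σ μ : Set (D × H)} (hσ : I.isMatching σ)
    (hμ : I.isMatching μ) {a a' b : D × H} (ha : a ∈ σ) (ha' : a' ∈ σ)
    (hab : altSucc μ a b) (ha'b : altSucc μ a' b) : a = a' := by
  obtain ⟨m, hm, hm1, hm2⟩ := hab
  obtain ⟨m', hm', hm'1, hm'2⟩ := ha'b
  have : m = m' := hμ.2.2 _ hm _ hm' (hm2.trans hm'2.symm)
  subst this
  exact hσ.2.1 _ ha _ ha' (hm1.symm.trans hm'1)

/-- Otherwise `e` blocks `σ`, strictly on its unmatched hospital outside `S`. -/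
theorem stable.exists_snd_eq {σ : Set (D × H)} (hσ : I.stable σ) {e : D × H} (he : e ∈ I.E)
    (heσ : e ∉ σ) (hS : e.2 ∉ I.S)
    (hpref : ∀ x ∈ σ, x.1 = e.1 → I.prefD e.1 (some e) (some x)) :
    ∃ y ∈ σ, y.2 = e.2 := by
  by_contra! hfree
  have hmuH : muH σ e.2 = none := dif_neg fun ⟨y, hy, hy2⟩ => hfree y hy hy2
  have hpn := I.prefH_none e.2 e ⟨he, rfl⟩
  refine hσ.2 e ⟨he, heσ, prefD_muD_of_forall he hpref, ⟨?_, fun h => absurd h hS⟩,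
    Or.inr ⟨?_, fun h => absurd h hS⟩⟩ <;> rw [hmuH]
  exacts [hpn.1, hpn]

theorem starAssumption.snd_not_mem_S (hstar : I.starAssumption) {g e : D × H} (hg : g ∈ I.E)
    (he : e ∈ I.E) (hd : e.1 = g.1) (hgS : g.2 ∉ I.S) (hpref : I.prefD g.1 (some e) (some g)) :
    e.2 ∉ I.S := by
  obtain ⟨d, h⟩ := g
  obtain ⟨d', h'⟩ := e
  obtain rfl : d' = d := hd
  exact fun heS => (hstar _ h' h he hg heS hgS).2 hpref

section Preprocessed

variable {R μ σ : Set (D × H)}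

theorem preproc.subset_diff (hpre : I.preproc R μ) (hσ : I.stable σ) : σ ⊆ I.E \ R :=
  fun e he => ⟨hσ.1.1 he, fun hR => hpre.2.2.1 σ hσ e hR he⟩

theorem preproc.exists_mu_edge (hpre : I.preproc R μ) {g : D × H} (hg : g ∈ I.E \ R) :
    ∃ m ∈ μ, m.1 = g.1 ∧ I.prefD g.1 (some m) (some g) := by
  obtain ⟨-, -, -, hR2, hR3, -⟩ := hpre
  obtain ⟨m, hm, hmd⟩ := hR3 g.1 ⟨g, hg, rfl⟩
  refine ⟨m, hm, hmd, ?_⟩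
  have := (hR2 hm).1.2 g hg hmd.symm
  rwa [hmd] at this

def chainEdges (I : SSMC D H) (σ μ : Set (D × H)) : Set (D × H) :=
  {g | g ∈ σ ∧ g ∉ μ ∧ g.2 ∉ I.S}

theorem exists_altSucc_mem_chainEdges (hstar : I.starAssumption) (hpre : I.preproc R μ)
    (hσ : I.stable σ) {g : D × H} (hg : g ∈ I.chainEdges σ μ) :
    ∃ g' ∈ I.chainEdges σ μ, altSucc μ g g' := by
  obtain ⟨hgσ, hgμ, hgS⟩ := hg
  obtain ⟨m, hm, hmd, hpref⟩ := hpre.exists_mu_edge (hpre.subset_diff hσ hgσ)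
  have hmE : m ∈ I.E := hpre.2.1.1 hm
  have hmσ : m ∉ σ := fun hmσ => hgμ (hσ.1.2.1 _ hmσ _ hgσ hmd ▸ hm)
  have hmS : m.2 ∉ I.S := hstar.snd_not_mem_S (hσ.1.1 hgσ) hmE hmd hgS hpref
  obtain ⟨g', hg'σ, hg'2⟩ := hσ.exists_snd_eq hmE hmσ hmS fun x hx hxd => by
    rw [hmd] at hxd ⊢
    rwa [hσ.1.2.1 _ hx _ hgσ hxd]
  refine ⟨g', ⟨hg'σ, fun hg'μ => hmσ ?_, hg'2 ▸ hmS⟩, m, hm, hmd, hg'2.symm⟩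
  rwa [← hpre.2.1.2.2 _ hg'μ _ hm hg'2]

/-- Both kinds of witness for criticality are edges their doctor weakly prefers to all of `E \ R`:
an edge of `Ch(E \ R)` by definition, an edge of `R` by (R5). -/
theorem critical.exists_mem_snd_eq (hpre : I.preproc R μ) (hσ : I.stable σ) {h₀ : H}
    (hcrit : I.critical R μ h₀) : ∃ g ∈ σ, g.2 = h₀ := by
  suffices key : ∀ e ∈ I.E, e.2 = h₀ →
      (∀ f ∈ I.E \ R, f.1 = e.1 → I.prefD e.1 (some e) (some f)) → ∃ g ∈ σ, g.2 = h₀ by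
    obtain ⟨hRE, -, -, -, -, -, hR5⟩ := hpre
    rcases hcrit.2.2 with ⟨a, ha, rfl⟩ | ⟨r, hr, rfl⟩
    · exact key a ha.1.1.1 rfl ha.1.2
    · exact key r (hRE hr) rfl (hR5 _ r hr rfl)
  rintro e he rfl hbest
  by_cases heσ : e ∈ σ
  · exact ⟨e, heσ, rfl⟩
  · exact hσ.exists_snd_eq he heσ hcrit.1 fun x hx => hbest x (hpre.subset_diff hσ hx)

end Preprocessed

end SSMC

theorem critical_implies_no_stable_general {D H : Type} [Fintype D]
    (I : SSMC D H) (hstar : I.starAssumption)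
    (R μ : Set (D × H)) (hpre : I.preproc R μ)
    (hc : ∃ h : H, I.critical R μ h) :
    ¬ ∃ σ : Set (D × H), I.stable σ := by
  rintro ⟨σ, hσ⟩
  obtain ⟨h₀, hcrit⟩ := hc
  obtain ⟨g₀, hg₀σ, rfl⟩ := hcrit.exists_mem_snd_eq hpre hσ
  have hg₀ : g₀ ∈ I.chainEdges σ μ :=
    ⟨hg₀σ, fun hg₀μ => hcrit.2.1 g₀ hg₀μ rfl, hcrit.1⟩
  have hfin : (I.chainEdges σ μ).Finite := hσ.1.finite.subset fun _ hg => hg.1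
  obtain ⟨a, -, m, hm, -, hm₀⟩ :=
    hfin.exists_rel_of_forall_exists_rel (altSucc μ)
      (fun _ hg => SSMC.exists_altSucc_mem_chainEdges hstar hpre hσ hg)
      (fun _ ha _ ha' _ => hσ.1.altSucc_injective hpre.2.1 ha.1 ha'.1) g₀ hg₀
  exact hcrit.2.1 m hm hm₀

/-- under assumption (★), if `(R, μ)` satisfies the pre-processing
conditions and there exists a critical hospital with respect to `(R, μ)`, then
there is no stable matching in `G`. -/
theorem critical_implies_no_stable {D H : Type} [Fintype D] [Fintype H]
    (I : SSMC D H) (hstar : I.starAssumption)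
    (R μ : Set (D × H)) (hpre : I.preproc R μ)
    (hc : ∃ h : H, I.critical R μ h) :
    ¬ ∃ σ : Set (D × H), I.stable σ :=
  critical_implies_no_stable_general I hstar R μ hpre hc
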